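/- arXiv:1912.13052 — 4 statements merged into one kernel-verified Lean document; each statement's English description precedes it below -/
import Mathlib

section
/- With notation as in the inductive construction of the scaled exponent vectors: suppose $\widetilde{\mathfrak{m}}_{i-1} = C_{i-1}\left(\frac{\mathfrak{m}_{i-1}}{a} - \tilde{x}_{i-1}\right)$, define $C_i := \frac{a \langle n_{0,i}, \widetilde{\mathfrak{m}}_{i-1}\rangle}{\langle n_{0,i}, \mathfrak{m}_{i-1}\rangle}$ and $\widetilde{\mathfrak{m}}_i := C_i \left(\frac{\mathfrak{m}_i}{a} - \tilde{x}_i\right)$, where $\tilde{x}_i = \tilde{x}_{i-1} - \frac{\langle n_{0,i}, \tilde{x}_{i-1}\rangle}{\langle n_{0,i}, \widetilde{\mathfrak{m}}_{i-1}\rangle}\widetilde{\mathfrak{m}}_{i-1}$, $\mathfrak{m}_{i-1} - \mathfrak{m}_i = k_i m_{0,i}$, and $\langle n_{0,i}, \widetilde{\mathfrak{m}}_{i-1}\rangle \neq 0 \neq \langle n_{0,i}, \mathfrak{m}_{i-1}\rangle$. Then $\widetilde{\mathfrak{m}}_{i-1} - \widetilde{\mathfrak{m}}_i = \frac{\langle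 n_{0,i}, \widetilde{\mathfrak{m}}_{i-1}\rangle}{\langle n_{0,i}, \mathfrak{m}_{i-1}\rangle} \, k_i \, m_{0,i} = \frac{\langle n_{0,i}, \widetilde{\mathfrak{m}}_{i-1}\rangle}{\langle n_{0,i}, \mathfrak{m}_{i-1}\rangle}(\mathfrak{m}_{i-1} - \mathfrak{m}_i)$. -/
/-!
`x̃_i` is the point where the line through `x̃_{i-1}` in direction `𝔪̃_{i-1}` meets `n₀^⊥`, so
`𝔪_{i-1}/a - x̃_i` is still a multiple of `𝔪̃_{i-1}`; pairing with `n₀` shows that `C_i` rescales it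
to exactly `𝔪̃_{i-1}`. Hence `𝔪̃_i = C_i (𝔪_i/a - x̃_i)` differs from `𝔪̃_{i-1}` by
`(C_i/a)(𝔪_{i-1} - 𝔪_i)`.
-/

namespace LinearMap

variable {K V : Type*} [Field K] [AddCommGroup V] [Module K V]

theorem apply_sub_div_apply_smul_eq_zero (f : V →ₗ[K] K) {v : V} (hv : f v ≠ 0) (x : V) :
    f (x - (f x / f v) • v) = 0 := by
  rw [map_sub, map_smul, smul_eq_mul, div_mul_cancel₀ _ hv, sub_self]

theorem div_apply_smul_eq_of_eq_smul (f : V →ₗ[K] K) {u v y : V} {c d : K}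
    (hu : u = c • y) (hv : v = d • y) (hfu : f u ≠ 0) : (f v / f u) • u = v := by
  subst hu hv
  rw [map_smul, smul_eq_mul] at hfu ⊢
  have hc : c ≠ 0 := left_ne_zero_of_mul hfu
  have hy : f y ≠ 0 := right_ne_zero_of_mul hfu
  rw [map_smul, smul_eq_mul, smul_smul]
  congr 1
  field_simp

end LinearMap

/-- the central algebraic computation in the key lemma.
In a real vector space with functional `n0`, positive integer `a`, points
`xprev = x̃_{i-1}`, `xcur = x̃_i`, and exponent vectors as in the inductive
construction:
`𝔪̃_{i-1} = C_{i-1}(𝔪_{i-1}/a - x̃_{i-1})`,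
`x̃_i = x̃_{i-1} - (⟨n0, x̃_{i-1}⟩/⟨n0, 𝔪̃_{i-1}⟩) 𝔪̃_{i-1}`,
`𝔪̃_i = (a⟨n0, 𝔪̃_{i-1}⟩/⟨n0, 𝔪_{i-1}⟩)(𝔪_i/a - x̃_i)`, and
`𝔪_{i-1} - 𝔪_i = k 𝔪_{0,i}`, with `⟨n0, 𝔪̃_{i-1}⟩ ≠ 0 ≠ ⟨n0, 𝔪_{i-1}⟩`,
one has
`𝔪̃_{i-1} - 𝔪̃_i = (⟨n0, 𝔪̃_{i-1}⟩/⟨n0, 𝔪_{i-1}⟩) k 𝔪_{0,i}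
               = (⟨n0, 𝔪̃_{i-1}⟩/⟨n0, 𝔪_{i-1}⟩)(𝔪_{i-1} - 𝔪_i)`. -/
theorem key_lemma_bend_computation
    {V : Type*} [AddCommGroup V] [Module ℝ V]
    (n0 : V →ₗ[ℝ] ℝ) (a : ℕ) (ha : 0 < a)
    (mprev mcur m0 : V) (k : ℤ)
    (xprev xcur mtprev mtcur : V) (Cprev : ℝ)
    (hmtprev : mtprev = Cprev • (((a : ℝ))⁻¹ • mprev - xprev))
    (hx : xcur = xprev - ((n0 xprev) / (n0 mtprev)) • mtprev)
    (hmtcur : mtcur = (((a : ℝ) * n0 mtprev) / (n0 mprev)) •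
      (((a : ℝ))⁻¹ • mcur - xcur))
    (hbend : mprev - mcur = (k : ℝ) • m0)
    (h1 : n0 mtprev ≠ 0) (h2 : n0 mprev ≠ 0) :
    mtprev - mtcur = ((n0 mtprev) / (n0 mprev)) • ((k : ℝ) • m0) ∧
    mtprev - mtcur = ((n0 mtprev) / (n0 mprev)) • (mprev - mcur) := by
  have ha' : (a : ℝ) ≠ 0 := Nat.cast_ne_zero.mpr ha.ne'
  have hxcur : n0 xcur = 0 := hx ▸ n0.apply_sub_div_apply_smul_eq_zero h1 xprev
  have hdir : (a : ℝ)⁻¹ • mprev - xcur =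
      (1 + n0 xprev / n0 mtprev * Cprev) • ((a : ℝ)⁻¹ • mprev - xprev) := by
    rw [hx, hmtprev]
    module
  have hpair : n0 ((a : ℝ)⁻¹ • mprev - xcur) = (a : ℝ)⁻¹ * n0 mprev := by
    rw [map_sub, map_smul, hxcur, smul_eq_mul, sub_zero]
  have hrescale : ((a : ℝ) * n0 mtprev / n0 mprev) • ((a : ℝ)⁻¹ • mprev - xcur) = mtprev := by
    have h := n0.div_apply_smul_eq_of_eq_smul hdir hmtprev
      (by rw [hpair]; exact mul_ne_zero (inv_ne_zero ha') h2)
    rwa [hpair, div_mul_eq_div_div_swap, div_inv_eq_mul, mul_comm, ← mul_div_assoc] at h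
  have key : mtprev - mtcur = (n0 mtprev / n0 mprev) • (mprev - mcur) := by
    calc mtprev - mtcur
        = ((a : ℝ) * n0 mtprev / n0 mprev) • ((a : ℝ)⁻¹ • mprev - xcur)
          - ((a : ℝ) * n0 mtprev / n0 mprev) • ((a : ℝ)⁻¹ • mcur - xcur) := by
          rw [hrescale, hmtcur]
      _ = ((a : ℝ) * n0 mtprev / n0 mprev * (a : ℝ)⁻¹) • (mprev - mcur) := by module
      _ = (n0 mtprev / n0 mprev) • (mprev - mcur) := by
          rw [mul_div_assoc, mul_comm, ← mul_assoc, inv_mul_cancel₀ ha', one_mul]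
  exact ⟨hbend ▸ key, key⟩
end

section
/- Suppose given real numbers $\tau < t_s < \cdots < t_1 < t_0 = 0$, points $\tilde{x}_0, \dots, \tilde{x}_s$ and vectors $\widetilde{\mathfrak{m}}_0, \dots, \widetilde{\mathfrak{m}}_s, \mathfrak{m}_0, \dots, \mathfrak{m}_s$ in a real vector space, a positive integer $a$, and vectors $m_{0,i}$ with nonzero functionals $n_{0,i}$ ($1 \le i \le s$) such that: (i) $\tilde{x}_{i+1} - \tilde{x}_i = (t_i - t_{i+1}) \widetilde{\mathfrak{m}}_i$ for $0 \le i < s$; (ii) $\frac{\mathfrak{m}_s}{a} - \tilde{x}_s = (t_s - \tau)\widetilde{\mathfrak{m}}_s$; (iii) $\mathfrak{m}_{i-1} - \mathfrak{m}_i = k_i m_{0,i}$ and $\widetilde{\mathfrak{m}}_{i-1} - \widetilde{\mathfrak{m}}_i = \frac{\langle n_{0,i}, \widetilde{\mathfrak{m}}_{i-1}\rangle}{\langle n_{0,i},\mathfrak{m}_{i-1}\rangle} k_i m_{0,i}$ for $1 \le i \le s$; and (iv) $t_i - \tau = \frac{\langle n_{0,i}, \mathfrak{m}_{i-1}\rangle}{a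 \langle n_{0,i}, \widetilde{\mathfrak{m}}_{i-1}\rangle}$ for $1 \le i \le s$. Then for every $0 \le i \le s$ one has $\frac{\mathfrak{m}_i}{a} - \tilde{x}_i = (t_i - \tau)\widetilde{\mathfrak{m}}_i$. -/
/-- Lemma `lem:tildetime`.
Given the data of the constructed broken line segment — times
`τ < t s < ⋯ < t 1 < t 0 = 0`, bending points `xt i`, velocities `mt i`,
original exponent vectors `m i`, walls `(n0 i, m0 i)` with `n0 i` nonzero on
the relevant vectors, a positive integer `a`, and hypotheses (i)–(iv) — one has
`m i / a - xt i = (t i - τ) • mt i` for all `0 ≤ i ≤ s`. -/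
theorem tildetime
    {V : Type*} [AddCommGroup V] [Module ℝ V]
    (s : ℕ) (τ : ℝ) (t : ℕ → ℝ)
    (xt mt m m0 : ℕ → V) (n0 : ℕ → (V →ₗ[ℝ] ℝ)) (k : ℕ → ℤ)
    (a : ℕ) (ha : 0 < a)
    (ht0 : t 0 = 0) (htlt : ∀ i, i < s → t (i + 1) < t i) (hτ : τ < t s)
    (hn1 : ∀ i, 1 ≤ i → i ≤ s → n0 i (mt (i - 1)) ≠ 0)
    (hn2 : ∀ i, 1 ≤ i → i ≤ s → n0 i (m (i - 1)) ≠ 0)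
    (h1 : ∀ i, i < s → xt (i + 1) - xt i = (t i - t (i + 1)) • mt i)
    (h2 : ((a : ℝ))⁻¹ • m s - xt s = (t s - τ) • mt s)
    (h3 : ∀ i, 1 ≤ i → i ≤ s → m (i - 1) - m i = (k i : ℝ) • m0 i)
    (h4 : ∀ i, 1 ≤ i → i ≤ s →
      mt (i - 1) - mt i
        = ((n0 i (mt (i - 1))) / (n0 i (m (i - 1)))) • ((k i : ℝ) • m0 i))
    (h5 : ∀ i, 1 ≤ i → i ≤ s →
      t i - τ = (n0 i (m (i - 1))) / ((a : ℝ) * n0 i (mt (i - 1)))) :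
    ∀ i, i ≤ s → ((a : ℝ))⁻¹ • m i - xt i = (t i - τ) • mt i := by
  suffices H : ∀ d, d ≤ s →
      ((a : ℝ))⁻¹ • m (s - d) - xt (s - d) = (t (s - d) - τ) • mt (s - d) by
    intro i hi
    have := H (s - i) (Nat.sub_le _ _)
    rwa [Nat.sub_sub_self hi] at this
  intro d
  induction d with
  | zero => intro _; simpa using h2
  | succ d IH =>
    intro hd
    have hds : d ≤ s := Nat.le_of_succ_le hd
    set j := s - d with hjdef
    have hj1 : 1 ≤ j := by omega
    have hjs : j ≤ s := Nat.sub_le _ _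
    have hjj : s - (d + 1) = j - 1 := by omega
    have hjsucc : j - 1 + 1 = j := by omega
    rw [hjj]
    have IH' := IH hds
    have h1j : xt j - xt (j - 1) = (t (j - 1) - t j) • mt (j - 1) := by
      have := h1 (j - 1) (by omega)
      rwa [hjsucc] at this
    have h3j := h3 j hj1 hjs
    have h4j := h4 j hj1 hjs
    have hn1j := hn1 j hj1 hjs
    have hn2j := hn2 j hj1 hjs
    have ha' : (a : ℝ) ≠ 0 := Nat.cast_ne_zero.mpr ha.ne'
    have key : (t j - τ) * (n0 j (mt (j - 1)) / n0 j (m (j - 1))) = (a : ℝ)⁻¹ := by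
      rw [h5 j hj1 hjs]
      field_simp
    have key' : ((t j - τ) * (n0 j (mt (j - 1)) / n0 j (m (j - 1)))) • m0 j
        = (a : ℝ)⁻¹ • m0 j := by rw [key]
    linear_combination (norm := module) IH' + (a : ℝ)⁻¹ • h3j + h1j
      - (t j - τ) • h4j - (k j : ℝ) • key'
end

section
/- In the $G_2$ scattering diagram, with structure constants of theta functions defined by counts of balanced pairs of broken lines, the convex hull (in the vector space structure of the initial seed) of the eight $\mathbf{g}$-vectors $(1,0), (0,1), (-1,0), (0,-1), (1,-1), (1,-2), (1,-3), (2,-3)$ is not positive: one has $\vartheta_{(1,0)} \cdot \vartheta_{(-1,0)} = \vartheta_{(0,0)} + \vartheta_{(0,3)}$, i.e. $\alpha((1,0), (-1,0), (0,3)) \ne 0$, but $(0,3)$ is not contained in twice the convex hull of these eight points. -/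
/-- Integer pairing of a covector with a vector in `M = ℤ²`. -/
def G2pair (nv mv : ℤ × ℤ) : ℤ := nv.1 * mv.1 + nv.2 * mv.2

/-- Realization of an integral vector in `M ⊗ ℝ ≅ ℝ²`. -/
def G2toR (mv : ℤ × ℤ) : ℝ × ℝ := ((mv.1 : ℝ), (mv.2 : ℝ))

/-- `(c', m')` is a term of `c z^m (1 + z^v)^{|⟨n, m⟩|}` giving an actual bend. -/
def G2BendTerm (nv v : ℤ × ℤ) (c : ℤ) (mv : ℤ × ℤ) (c' : ℤ) (m' : ℤ × ℤ) : Prop :=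
  ∃ j : ℕ, 1 ≤ j ∧ (j : ℤ) ≤ |G2pair nv mv| ∧
    m' = mv + (j : ℤ) • v ∧ c' = c * ((G2pair nv mv).natAbs.choose j)

/-- Allowed bends of the `G₂` scattering diagram: the incoming walls are the
horizontal axis with function `1 + z^{-f₁} = 1 + z^{(-1,0)}` and the vertical
axis with function `1 + z^{3 f₂} = 1 + z^{(0,3)}`; the outgoing walls are the
fourth-quadrant rays `ℝ≥0(1,-1)`, `ℝ≥0(1,-2)`, `ℝ≥0(1,-3)`, `ℝ≥0(2,-3)` with
functions `1 + z^{(-3,3)}`, `1 + z^{(-3,6)}`, `1 + z^{(-1,3)}`,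
`1 + z^{(-2,3)}` respectively. -/
def G2AllowedBend (p : ℝ × ℝ) (c : ℤ) (mv : ℤ × ℤ) (c' : ℤ) (m' : ℤ × ℤ) : Prop :=
  (p.2 = 0 ∧ p.1 ≠ 0 ∧ G2BendTerm (0, 1) (-1, 0) c mv c' m') ∨
  (p.1 = 0 ∧ p.2 ≠ 0 ∧ G2BendTerm (1, 0) (0, 3) c mv c' m') ∨
  (∃ ρ : ℝ, 0 < ρ ∧ p = (ρ, -ρ) ∧ G2BendTerm (1, 1) (-3, 3) c mv c' m') ∨
  (∃ ρ : ℝ, 0 < ρ ∧ p = (ρ, -2 * ρ) ∧ G2BendTerm (2, 1) (-3, 6) c mv c' m') ∨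
  (∃ ρ : ℝ, 0 < ρ ∧ p = (ρ, -3 * ρ) ∧ G2BendTerm (3, 1) (-1, 3) c mv c' m') ∨
  (∃ ρ : ℝ, 0 < ρ ∧ p = (2 * ρ, -3 * ρ) ∧ G2BendTerm (3, 2) (-2, 3) c mv c' m')

/-- A broken line in the `G₂` scattering diagram with initial exponent `minit`
and endpoint `Q`. -/
structure G2BrokenLine (minit : ℤ × ℤ) (Q : ℝ × ℝ) where
  s : ℕ
  m : Fin (s + 1) → ℤ × ℤ
  c : Fin (s + 1) → ℤ
  x : Fin (s + 1) → ℝ × ℝ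
  hx0 : x 0 = Q
  hinitm : m (Fin.last s) = minit
  hinitc : c (Fin.last s) = 1
  hseg : ∀ i : Fin s, ∃ d : ℝ, 0 < d ∧
    x i.castSucc = x i.succ - d • G2toR (m i.castSucc)
  hbend : ∀ i : Fin s,
    G2AllowedBend (x i.succ) (c i.succ) (m i.succ) (c i.castSucc) (m i.castSucc)

/-- `α(p, q, r) ≠ 0`: for endpoints `z` arbitrarily close to `r` there is a
pair of broken lines with initial exponents `p`, `q`, common endpoint `z`, and
final exponents summing to `r` (the structure constants have nonnegative
contributions, so the existence of one contributing pair forces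
`α(p,q,r) ≠ 0`). -/
def G2AlphaNonzero (p q r : ℤ × ℤ) : Prop :=
  ∀ ε : ℝ, 0 < ε → ∃ z : ℝ × ℝ, dist z (G2toR r) < ε ∧
    ∃ (γ1 : G2BrokenLine p z) (γ2 : G2BrokenLine q z), γ1.m 0 + γ2.m 0 = r

/-- The `𝐠`-vectors of the cluster variables of the `G₂` cluster variety. -/
def G2gvectors : Set (ℝ × ℝ) :=
  {((1 : ℝ), (0 : ℝ)), ((0 : ℝ), (1 : ℝ)), ((-1 : ℝ), (0 : ℝ)),
   ((0 : ℝ), (-1 : ℝ)), ((1 : ℝ), (-1 : ℝ)), ((1 : ℝ), (-2 : ℝ)),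
   ((1 : ℝ), (-3 : ℝ)), ((2 : ℝ), (-3 : ℝ))}

/-- A closed subset `S` of the `G₂` tropical plane is positive if
`p ∈ aS(ℤ)`, `q ∈ bS(ℤ)` and `α(p,q,r) ≠ 0` imply `r ∈ (a+b)S(ℤ)`. -/
def G2Positive (S : Set (ℝ × ℝ)) : Prop :=
  ∀ a b : ℕ, ∀ p q r : ℤ × ℤ,
    (∃ s ∈ S, G2toR p = (a : ℝ) • s) → (∃ s ∈ S, G2toR q = (b : ℝ) • s) →
    G2AlphaNonzero p q r → ∃ s ∈ S, G2toR r = ((a : ℝ) + b) • s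

/-- The straight broken line with initial exponent `p` ending at `z`. -/
def G2straight (p : ℤ × ℤ) (z : ℝ × ℝ) : G2BrokenLine p z where
  s := 0
  m := fun _ => p
  c := fun _ => 1
  x := fun _ => z
  hx0 := rfl
  hinitm := rfl
  hinitc := rfl
  hseg := fun i => i.elim0
  hbend := fun i => i.elim0

lemma G2alpha_key : G2AlphaNonzero (1, 0) (-1, 0) (0, 3) := by
  intro ε hε
  set d : ℝ := ε / 4 with hd
  have hd0 : 0 < d := by positivity
  refine ⟨(d, 3 - 3 * d), ?_, G2straight (1, 0) _, ?_, ?_⟩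
  · have h1 : G2toR (0, 3) = ((0:ℝ), (3:ℝ)) := by norm_num [G2toR]
    rw [h1, Prod.dist_eq, max_lt_iff, Real.dist_eq, Real.dist_eq]
    constructor
    · rw [sub_zero, abs_of_pos hd0]; linarith
    · have h2 : (3 - 3 * d) - 3 = -(3 * d) := by ring
      rw [h2, abs_neg, abs_of_pos (by linarith)]
      linarith
  · exact
    { s := 1
      m := ![(-1, 3), (-1, 0)]
      c := ![1, 1]
      x := ![(d, 3 - 3 * d), (0, 3)]
      hx0 := rfl
      hinitm := rfl
      hinitc := rfl
      hseg := by
        intro i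
        fin_cases i
        refine ⟨d, hd0, ?_⟩
        show (d, 3 - 3 * d) = ((0:ℝ), (3:ℝ)) - d • G2toR (-1, 3)
        simp [G2toR, Prod.ext_iff]
        ring
      hbend := by
        intro i
        fin_cases i
        right; left
        refine ⟨rfl, by norm_num, 1, le_refl 1, ?_, ?_, ?_⟩
        · show (1:ℤ) ≤ |G2pair (1,0) (-1,0)|
          decide
        · decide
        · decide }
  · show ((1:ℤ), (0:ℤ)) + (-1, 3) = (0, 3)
    decide

lemma G2hull_snd_le (x : ℝ × ℝ) (hx : x ∈ convexHull ℝ G2gvectors) : x.2 ≤ 1 := by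
  have h : convexHull ℝ G2gvectors ⊆ {y : ℝ × ℝ | y.2 ≤ 1} := by
    apply convexHull_min
    · intro y hy
      simp only [G2gvectors, Set.mem_insert_iff, Set.mem_singleton_iff] at hy
      rcases hy with h|h|h|h|h|h|h|h <;> subst h <;> norm_num
    · exact convex_halfSpace_le ⟨fun a b => rfl, fun c a => rfl⟩ 1
  exact h hx

/-- In the `G₂` scattering diagram:
`ϑ_{(1,0)} · ϑ_{(-1,0)} = ϑ_{(0,0)} + ϑ_{(0,3)}`, i.e.
`α((1,0), (-1,0), (0,3)) ≠ 0`; the point `(0,3)` is not in twice the convex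
hull of the eight `𝐠`-vectors; hence that convex hull is not positive. -/

theorem G2_convex_hull_not_positive :
    G2AlphaNonzero (1, 0) (-1, 0) (0, 3) ∧
    ((0 : ℝ), (3 : ℝ)) ∉ (fun x : ℝ × ℝ => (2 : ℝ) • x) '' (convexHull ℝ G2gvectors) ∧
    ¬ G2Positive (convexHull ℝ G2gvectors) := by
  have hnot : ((0 : ℝ), (3 : ℝ)) ∉
      (fun x : ℝ × ℝ => (2 : ℝ) • x) '' (convexHull ℝ G2gvectors) := by
    rintro ⟨s, hs, heq⟩
    have h2 := G2hull_snd_le s hs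
    have : (3:ℝ) = 2 * s.2 := congrArg Prod.snd heq.symm
    linarith
  refine ⟨G2alpha_key, hnot, ?_⟩
  intro hpos
  have hmem : ∀ v ∈ G2gvectors, v ∈ convexHull ℝ G2gvectors :=
    fun v hv => subset_convexHull ℝ _ hv
  obtain ⟨s, hs, heq⟩ := hpos 1 1 (1, 0) (-1, 0) (0, 3)
    ⟨((1:ℝ), (0:ℝ)), hmem _ (by simp [G2gvectors]), by simp [G2toR]⟩
    ⟨((-1:ℝ), (0:ℝ)), hmem _ (by simp [G2gvectors]), by simp [G2toR]⟩
    G2alpha_key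
  refine hnot ⟨s, hs, ?_⟩
  show (2:ℝ) • s = ((0:ℝ), (3:ℝ))
  have h3 : G2toR (0, 3) = ((0:ℝ), (3:ℝ)) := by norm_num [G2toR]
  rw [← h3, heq]; norm_num
end

section
/- Let $\tilde{\gamma}: [0, T] \to V$ be a piecewise linear path with finitely many domains of linearity, attached monomials, and allowed bendings (a broken line segment). Then the reversed path $\overline{\tilde{\gamma}}: [0, T] \to V$ defined by $\overline{\tilde{\gamma}}(t) = \tilde{\gamma}(T - t)$, with the exponent vector on each domain of linearity negated, is also a broken line segment: each bend of $\overline{\tilde{\gamma}}$ is allowed. -/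
/-- Lemma `lem:reverse`: broken line segments can be
traversed in both directions.
A broken line segment is encoded by its exponent data: positions
`x 0, …, x (s+1)` in the ambient real vector space `V` (with `x 0` and
`x (s+1)` the endpoints and `x (i+1)` the bend points), integral exponent
vectors `m i ∈ M` on the domains of linearity (realized in `V` via `toV`),
velocity `-(m i)` on domain `i`, and at each bend a wall with functional
`nf i`, multiplicity `coefs i`, and exponent `v i ∈ (nf i)⊥`, the bend from
domain `i` to domain `i+1` being *allowed*:
`m i.castSucc = m i.succ + j • v i` for some `0 ≤ j ≤ coefs i * ⟨nf i, m i.castSucc⟩`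
(sign conventions absorbed into `nf i`).
Then the reversed data — positions `x ∘ Fin.rev`, exponents `-(m ∘ Fin.rev)`,
wall functionals `-(nf ∘ Fin.rev)` — is again a broken line segment: the
velocity conditions hold and every bend of the reversed segment is allowed. -/
theorem broken_line_segment_reverse
    {V M : Type*} [AddCommGroup V] [Module ℝ V] [AddCommGroup M]
    (toV : M →+ V)
    (s : ℕ)
    (x : Fin (s + 2) → V) (m : Fin (s + 1) → M)
    (coefs : Fin s → ℕ) (nf : Fin s → (M →+ ℤ)) (v : Fin s → M)
    (hwall : ∀ i : Fin s, nf i (v i) = 0)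
    (hseg : ∀ i : Fin (s + 1), ∃ d : ℝ, 0 < d ∧
      x i.succ = x i.castSucc + d • (-(toV (m i))))
    (hbend : ∀ i : Fin s,
      ∃ j : ℕ, (j : ℤ) ≤ (coefs i : ℤ) * nf i (m i.castSucc) ∧
        m i.castSucc = m i.succ + (j : ℤ) • v i) :
    (∀ i : Fin (s + 1), ∃ d : ℝ, 0 < d ∧
      x (i.succ.rev) = x (i.castSucc.rev) + d • (-(toV (-(m i.rev))))) ∧
    (∀ i : Fin s,
      ∃ j : ℕ, (j : ℤ) ≤ (coefs i.rev : ℤ) * (-(nf i.rev)) (-(m ((i.castSucc).rev))) ∧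
        -(m ((i.castSucc).rev)) = -(m ((i.succ).rev)) + (j : ℤ) • v i.rev) := by
  have h1 : ∀ i : Fin (s + 1), i.succ.rev = i.rev.castSucc := by
    intro i; ext; simp [Fin.rev]
  have h2 : ∀ i : Fin (s + 1), i.castSucc.rev = i.rev.succ := by
    intro i; ext; simp [Fin.rev]; omega
  have h3 : ∀ i : Fin s, (Fin.castSucc i).rev = i.rev.succ := by
    intro i; ext; simp [Fin.rev]; omega
  have h4 : ∀ i : Fin s, i.succ.rev = i.rev.castSucc := by
    intro i; ext; simp [Fin.rev]
  constructor
  · intro i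
    obtain ⟨d, hd, hx⟩ := hseg i.rev
    exact ⟨d, hd, by rw [h1, h2, hx]; simp [map_neg]⟩
  · intro i
    obtain ⟨j, hj, hm⟩ := hbend i.rev
    refine ⟨j, ?_, ?_⟩
    · rw [h3]
      simp only [AddMonoidHom.neg_apply, map_neg, neg_neg]
      calc (j : ℤ) ≤ (coefs i.rev : ℤ) * nf i.rev (m i.rev.castSucc) := hj
        _ = (coefs i.rev : ℤ) * nf i.rev (m i.rev.succ) := by
            rw [hm]; simp [hwall]
    · rw [h3, h4, hm]; abel
end
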